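/- arXiv:1509.02650 — 7 statements merged into one kernel-verified Lean document; each statement's English description precedes it below -/
import Mathlib

section
/- If X1 and X2 are independent nonnegative random variables with distribution functions F1, F2 supported on [0,b1], [0,b2], then the bivariate CPE factorizes as CPE(X1,X2) = (∫₀^{b2} F2(x2) dx2)·CPE(X1) + (∫₀^{b1} F1(x1) dx1)·CPE(X2), where CPE(Xi) = -∫₀^{bi} Fi(x) log Fi(x) dx. -/
open MeasureTheory Real Set intervalIntegral

/-- If `X1` and `X2` are independent, so that the joint distribution
function factorizes as `F(x1,x2) = F1(x1) F2(x2)`, then the bivariate CPE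
factorizes as
`CPE(X1,X2) = (∫₀^{b2} F2) · CPE(X1) + (∫₀^{b1} F1) · CPE(X2)`. -/
theorem bivariate_CPE_independent
    (b1 b2 : ℝ) (hb1 : 0 < b1) (hb2 : 0 < b2)
    (F1 F2 : ℝ → ℝ)
    (hF1pos : ∀ x ∈ Set.Ioc (0:ℝ) b1, 0 < F1 x)
    (hF2pos : ∀ x ∈ Set.Ioc (0:ℝ) b2, 0 < F2 x)
    (hF1le : ∀ x, F1 x ≤ 1) (hF2le : ∀ x, F2 x ≤ 1)
    (hi1 : IntervalIntegrable F1 volume 0 b1)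
    (hi2 : IntervalIntegrable F2 volume 0 b2)
    (hi1' : IntervalIntegrable (fun x => F1 x * Real.log (F1 x)) volume 0 b1)
    (hi2' : IntervalIntegrable (fun x => F2 x * Real.log (F2 x)) volume 0 b2) :
    (-∫ x1 in (0:ℝ)..b1, ∫ x2 in (0:ℝ)..b2,
        F1 x1 * F2 x2 * Real.log (F1 x1 * F2 x2)) =
      (∫ x2 in (0:ℝ)..b2, F2 x2) * (-∫ x1 in (0:ℝ)..b1, F1 x1 * Real.log (F1 x1))
        + (∫ x1 in (0:ℝ)..b1, F1 x1) *
            (-∫ x2 in (0:ℝ)..b2, F2 x2 * Real.log (F2 x2)) := by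
  set I1 := ∫ x in (0:ℝ)..b1, F1 x with hI1
  set I2 := ∫ x in (0:ℝ)..b2, F2 x with hI2
  set J1 := ∫ x in (0:ℝ)..b1, F1 x * Real.log (F1 x) with hJ1
  set J2 := ∫ x in (0:ℝ)..b2, F2 x * Real.log (F2 x) with hJ2
  have hIoc1 : Set.uIoc (0:ℝ) b1 = Set.Ioc 0 b1 := Set.uIoc_of_le hb1.le
  have hIoc2 : Set.uIoc (0:ℝ) b2 = Set.Ioc 0 b2 := Set.uIoc_of_le hb2.le
  have inner : ∀ x1 ∈ Set.Ioc (0:ℝ) b1,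
      (∫ x2 in (0:ℝ)..b2, F1 x1 * F2 x2 * Real.log (F1 x1 * F2 x2))
        = F1 x1 * Real.log (F1 x1) * I2 + F1 x1 * J2 := by
    intro x1 hx1
    have h1 : (0:ℝ) < F1 x1 := hF1pos x1 hx1
    have hcong : (∫ x2 in (0:ℝ)..b2, F1 x1 * F2 x2 * Real.log (F1 x1 * F2 x2))
        = ∫ x2 in (0:ℝ)..b2,
            (F1 x1 * Real.log (F1 x1)) * F2 x2 + F1 x1 * (F2 x2 * Real.log (F2 x2)) := by
      apply intervalIntegral.integral_congr_ae
      filter_upwards with x2 hx2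
      rw [hIoc2] at hx2
      have h2 : (0:ℝ) < F2 x2 := hF2pos x2 hx2
      rw [Real.log_mul h1.ne' h2.ne']
      ring
    rw [hcong, intervalIntegral.integral_add
        (hi2.const_mul _) (hi2'.const_mul _),
      intervalIntegral.integral_const_mul, intervalIntegral.integral_const_mul]
  have houter : (∫ x1 in (0:ℝ)..b1, ∫ x2 in (0:ℝ)..b2,
        F1 x1 * F2 x2 * Real.log (F1 x1 * F2 x2))
      = ∫ x1 in (0:ℝ)..b1, (F1 x1 * Real.log (F1 x1)) * I2 + F1 x1 * J2 := by
    apply intervalIntegral.integral_congr_ae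
    filter_upwards with x1 hx1
    rw [hIoc1] at hx1
    exact inner x1 hx1
  rw [houter, intervalIntegral.integral_add (hi1'.mul_const _) (hi1.mul_const _),
    intervalIntegral.integral_mul_const, intervalIntegral.integral_mul_const,
    ← hJ1, ← hI1]
  ring
end

section
/- If X1 and X2 are independent nonnegative random variables with supports [0,b1] and [0,b2], finite means μ1, μ2, then CPE(X1,X2) = (b2 - μ2)·CPE(X1) + (b1 - μ1)·CPE(X2). -/
open MeasureTheory Real Set intervalIntegral

/-- If `X1, X2` are independent nonnegative random variables with
distribution functions `F1, F2` supported on `[0,b1]`, `[0,b2]` and finite means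
`μ1, μ2` (so that `∫₀^{bi} Fi = bi - μi`), then
`CPE(X1,X2) = (b2 - μ2)·CPE(X1) + (b1 - μ1)·CPE(X2)`. -/
theorem bivariate_CPE_independent_mean
    (b1 b2 μ1 μ2 : ℝ) (hb1 : 0 < b1) (hb2 : 0 < b2)
    (F1 F2 : ℝ → ℝ)
    (hF1pos : ∀ x ∈ Set.Ioc (0:ℝ) b1, 0 < F1 x)
    (hF2pos : ∀ x ∈ Set.Ioc (0:ℝ) b2, 0 < F2 x)
    (hF1le : ∀ x, F1 x ≤ 1) (hF2le : ∀ x, F2 x ≤ 1)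
    (hi1 : IntervalIntegrable F1 volume 0 b1)
    (hi2 : IntervalIntegrable F2 volume 0 b2)
    (hi1' : IntervalIntegrable (fun x => F1 x * Real.log (F1 x)) volume 0 b1)
    (hi2' : IntervalIntegrable (fun x => F2 x * Real.log (F2 x)) volume 0 b2)
    (hμ1 : (∫ x in (0:ℝ)..b1, F1 x) = b1 - μ1)
    (hμ2 : (∫ x in (0:ℝ)..b2, F2 x) = b2 - μ2) :
    (-∫ x1 in (0:ℝ)..b1, ∫ x2 in (0:ℝ)..b2,
        F1 x1 * F2 x2 * Real.log (F1 x1 * F2 x2)) =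
      (b2 - μ2) * (-∫ x1 in (0:ℝ)..b1, F1 x1 * Real.log (F1 x1))
        + (b1 - μ1) * (-∫ x2 in (0:ℝ)..b2, F2 x2 * Real.log (F2 x2)) := by
  have key : ∀ x1, (∫ x2 in (0:ℝ)..b2, F1 x1 * F2 x2 * Real.log (F1 x1 * F2 x2))
      = (b2 - μ2) * (F1 x1 * Real.log (F1 x1))
        + F1 x1 * (∫ x2 in (0:ℝ)..b2, F2 x2 * Real.log (F2 x2)) := by
    intro x1
    have hpt : ∀ x2, F1 x1 * F2 x2 * Real.log (F1 x1 * F2 x2)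
        = (F1 x1 * Real.log (F1 x1)) * F2 x2 + F1 x1 * (F2 x2 * Real.log (F2 x2)) := by
      intro x2
      rcases eq_or_ne (F1 x1) 0 with h1 | h1
      · simp [h1]
      rcases eq_or_ne (F2 x2) 0 with h2 | h2
      · simp [h2]
      rw [Real.log_mul h1 h2]; ring
    simp_rw [hpt]
    rw [intervalIntegral.integral_add (hi2.const_mul _) (hi2'.const_mul _),
      intervalIntegral.integral_const_mul, intervalIntegral.integral_const_mul, hμ2]
    ring
  simp_rw [key]
  rw [intervalIntegral.integral_add (hi1'.const_mul _)
      (hi1.mul_const _),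
    intervalIntegral.integral_const_mul, intervalIntegral.integral_mul_const, hμ1]
  ring
end

section
/- Let Yi = ci·Xi + di with ci > 0 and di ≥ 0 for i=1,2. Then the bivariate CPE satisfies CPE(Y1,Y2) = c1·c2·CPE(X1,X2); i.e., bivariate CPE is invariant under shifts and scales multiplicatively. -/
open MeasureTheory Real Set intervalIntegral

theorem intervalIntegral.integral_integral_comp_mul_add (f : ℝ → ℝ → ℝ)
    (c1 c2 d1 d2 a1 b1 a2 b2 : ℝ) :
    (∫ y1 in c1 * a1 + d1..c1 * b1 + d1, ∫ y2 in c2 * a2 + d2..c2 * b2 + d2, f y1 y2) =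
      c1 * c2 * ∫ x1 in a1..b1, ∫ x2 in a2..b2, f (c1 * x1 + d1) (c2 * x2 + d2) := by
  simp only [← smul_integral_comp_mul_add, smul_eq_mul, integral_const_mul, mul_assoc]

theorem bivariate_CPE_linear_transform_general
    (b1 b2 c1 c2 d1 d2 : ℝ)
    (hc1 : 0 < c1) (hc2 : 0 < c2)
    (F : ℝ → ℝ → ℝ)
    (G : ℝ → ℝ → ℝ)
    (hG : ∀ y1 y2, G y1 y2 = F ((y1 - d1) / c1) ((y2 - d2) / c2)) :
    (-∫ y1 in d1..(c1 * b1 + d1), ∫ y2 in d2..(c2 * b2 + d2),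
        G y1 y2 * Real.log (G y1 y2)) =
      c1 * c2 *
        (-∫ x1 in (0:ℝ)..b1, ∫ x2 in (0:ℝ)..b2,
            F x1 x2 * Real.log (F x1 x2)) := by
  have hG_comp : ∀ x1 x2, G (c1 * x1 + d1) (c2 * x2 + d2) = F x1 x2 := by
    intro x1 x2
    rw [hG, add_sub_cancel_right, add_sub_cancel_right, mul_div_cancel_left₀ _ hc1.ne',
      mul_div_cancel_left₀ _ hc2.ne']
  have h := integral_integral_comp_mul_add (fun y1 y2 => G y1 y2 * Real.log (G y1 y2))
    c1 c2 d1 d2 0 b1 0 b2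
  simp only [mul_zero, zero_add, hG_comp] at h
  rw [h, mul_neg]

/-- If `Yi = ci·Xi + di` with `ci > 0`, `di ≥ 0`, then the joint
distribution function of `Y` is `G(y1,y2) = F((y1-d1)/c1, (y2-d2)/c2)` and the
bivariate CPE satisfies `CPE(Y1,Y2) = c1·c2·CPE(X1,X2)`. -/
theorem bivariate_CPE_linear_transform
    (b1 b2 c1 c2 d1 d2 : ℝ) (hb1 : 0 < b1) (hb2 : 0 < b2)
    (hc1 : 0 < c1) (hc2 : 0 < c2) (hd1 : 0 ≤ d1) (hd2 : 0 ≤ d2)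
    (F : ℝ → ℝ → ℝ)
    (G : ℝ → ℝ → ℝ)
    (hG : ∀ y1 y2, G y1 y2 = F ((y1 - d1) / c1) ((y2 - d2) / c2))
    (hint : ∀ x1, IntervalIntegrable
      (fun x2 => F x1 x2 * Real.log (F x1 x2)) volume 0 b2)
    (hint' : IntervalIntegrable
      (fun x1 => ∫ x2 in (0:ℝ)..b2, F x1 x2 * Real.log (F x1 x2)) volume 0 b1) :
    (-∫ y1 in d1..(c1 * b1 + d1), ∫ y2 in d2..(c2 * b2 + d2),
        G y1 y2 * Real.log (G y1 y2)) =
      c1 * c2 *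
        (-∫ x1 in (0:ℝ)..b1, ∫ x2 in (0:ℝ)..b2,
            F x1 x2 * Real.log (F x1 x2)) :=
  bivariate_CPE_linear_transform_general b1 b2 c1 c2 d1 d2 hc1 hc2 F G hG
end

section
/- If X1 and X2 are independent, then the bivariate dynamic CPE ε̄_X(t1,t2) = -∫₀^{t1}∫₀^{t2} [F(x1,x2)/F(t1,t2)] log[F(x1,x2)/F(t1,t2)] dx2 dx1 satisfies ε̄_X(t1,t2) = m2(t2)·ε̄_{X1}(t1) + m1(t1)·ε̄_{X2}(t2), where mi(ti) = E(ti - Xi | Xi ≤ ti) is the marginal expected inactivity time and ε̄_{Xi}(ti) = -∫₀^{ti} [Fi(x)/Fi(ti)] log[Fi(x)/Fi(ti)] dx is the marginal dynamic CPE. -/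
open MeasureTheory Real Set intervalIntegral

lemma aux_integrable (t : ℝ) (ht : 0 < t) (F : ℝ → ℝ)
    (hpos : ∀ x ∈ Set.Ioc (0:ℝ) t, 0 < F x)
    (hi : IntervalIntegrable F volume 0 t)
    (hi' : IntervalIntegrable (fun x => F x * Real.log (F x)) volume 0 t) :
    IntervalIntegrable (fun x => (F x / F t) * Real.log (F x / F t)) volume 0 t := by
  have hFt : 0 < F t := hpos t ⟨ht, le_rfl⟩
  have hg : IntervalIntegrable
      (fun x => (1 / F t) * (F x * Real.log (F x)) - (Real.log (F t) / F t) * F x)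
      volume 0 t := (hi'.const_mul _).sub (hi.const_mul _)
  rw [intervalIntegrable_iff_integrableOn_Ioc_of_le ht.le] at hg ⊢
  refine hg.congr_fun (fun x hx => ?_) measurableSet_Ioc
  have hFx : 0 < F x := hpos x hx
  rw [Real.log_div hFx.ne' hFt.ne']
  field_simp

/-- If `X1` and `X2` are independent (so `F(x1,x2) = F1(x1) F2(x2)`),
then the bivariate dynamic CPE satisfies
`ε̄_X(t1,t2) = m2(t2)·ε̄_{X1}(t1) + m1(t1)·ε̄_{X2}(t2)`, where
`mi(ti) = (1/Fi(ti)) ∫₀^{ti} Fi` is the marginal expected inactivity time and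
`ε̄_{Xi}(ti) = -∫₀^{ti} (Fi(x)/Fi(ti)) log (Fi(x)/Fi(ti)) dx`. -/
theorem bivariate_DCPE_independent
    (t1 t2 : ℝ) (ht1 : 0 < t1) (ht2 : 0 < t2)
    (F1 F2 : ℝ → ℝ)
    (hF1pos : ∀ x ∈ Set.Ioc (0:ℝ) t1, 0 < F1 x)
    (hF2pos : ∀ x ∈ Set.Ioc (0:ℝ) t2, 0 < F2 x)
    (hi1 : IntervalIntegrable F1 volume 0 t1)
    (hi2 : IntervalIntegrable F2 volume 0 t2)
    (hi1' : IntervalIntegrable (fun x => F1 x * Real.log (F1 x)) volume 0 t1)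
    (hi2' : IntervalIntegrable (fun x => F2 x * Real.log (F2 x)) volume 0 t2) :
    (-∫ x1 in (0:ℝ)..t1, ∫ x2 in (0:ℝ)..t2,
        (F1 x1 * F2 x2 / (F1 t1 * F2 t2)) *
          Real.log (F1 x1 * F2 x2 / (F1 t1 * F2 t2))) =
      ((∫ x in (0:ℝ)..t2, F2 x) / F2 t2) *
          (-∫ x in (0:ℝ)..t1, (F1 x / F1 t1) * Real.log (F1 x / F1 t1))
        + ((∫ x in (0:ℝ)..t1, F1 x) / F1 t1) *
            (-∫ x in (0:ℝ)..t2, (F2 x / F2 t2) * Real.log (F2 x / F2 t2)) := by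
  have ha1 : 0 < F1 t1 := hF1pos t1 ⟨ht1, le_rfl⟩
  have ha2 : 0 < F2 t2 := hF2pos t2 ⟨ht2, le_rfl⟩
  set A1 : ℝ := (∫ x in (0:ℝ)..t1, F1 x) / F1 t1 with hA1
  set A2 : ℝ := (∫ x in (0:ℝ)..t2, F2 x) / F2 t2 with hA2
  set E1 : ℝ := ∫ x in (0:ℝ)..t1, (F1 x / F1 t1) * Real.log (F1 x / F1 t1) with hE1
  set E2 : ℝ := ∫ x in (0:ℝ)..t2, (F2 x / F2 t2) * Real.log (F2 x / F2 t2) with hE2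
  have hc2 : IntervalIntegrable (fun x => (F2 x / F2 t2) * Real.log (F2 x / F2 t2))
      volume 0 t2 := aux_integrable t2 ht2 F2 hF2pos hi2 hi2'
  have hc1 : IntervalIntegrable (fun x => (F1 x / F1 t1) * Real.log (F1 x / F1 t1))
      volume 0 t1 := aux_integrable t1 ht1 F1 hF1pos hi1 hi1'
  have key : ∀ x1 ∈ Set.Ioc (0:ℝ) t1,
      (∫ x2 in (0:ℝ)..t2,
        (F1 x1 * F2 x2 / (F1 t1 * F2 t2)) *
          Real.log (F1 x1 * F2 x2 / (F1 t1 * F2 t2))) =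
      (F1 x1 / F1 t1 * Real.log (F1 x1 / F1 t1)) * A2 + (F1 x1 / F1 t1) * E2 := by
    intro x1 hx1
    have hp : 0 < F1 x1 / F1 t1 := div_pos (hF1pos x1 hx1) ha1
    have step : (∫ x2 in (0:ℝ)..t2,
        (F1 x1 * F2 x2 / (F1 t1 * F2 t2)) *
          Real.log (F1 x1 * F2 x2 / (F1 t1 * F2 t2))) =
        ∫ x2 in (0:ℝ)..t2,
          ((F1 x1 / F1 t1 * Real.log (F1 x1 / F1 t1)) * (F2 x2 / F2 t2)
            + (F1 x1 / F1 t1) * ((F2 x2 / F2 t2) * Real.log (F2 x2 / F2 t2))) := by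
      apply intervalIntegral.integral_congr_ae
      refine Filter.Eventually.of_forall (fun x2 hx2 => ?_)
      rw [Set.uIoc_of_le ht2.le] at hx2
      have hq : 0 < F2 x2 / F2 t2 := div_pos (hF2pos x2 hx2) ha2
      rw [mul_div_mul_comm, Real.log_mul hp.ne' hq.ne']
      ring
    rw [step, intervalIntegral.integral_add (((hi2.div_const _).const_mul _))
        (hc2.const_mul _), intervalIntegral.integral_const_mul,
      intervalIntegral.integral_const_mul, ← hE2, intervalIntegral.integral_div, ← hA2]
  have outer : (∫ x1 in (0:ℝ)..t1, ∫ x2 in (0:ℝ)..t2,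
        (F1 x1 * F2 x2 / (F1 t1 * F2 t2)) *
          Real.log (F1 x1 * F2 x2 / (F1 t1 * F2 t2))) =
      ∫ x1 in (0:ℝ)..t1,
        ((F1 x1 / F1 t1 * Real.log (F1 x1 / F1 t1)) * A2 + (F1 x1 / F1 t1) * E2) := by
    apply intervalIntegral.integral_congr_ae
    refine Filter.Eventually.of_forall (fun x1 hx1 => ?_)
    rw [Set.uIoc_of_le ht1.le] at hx1
    exact key x1 hx1
  rw [outer, intervalIntegral.integral_add (hc1.mul_const _)
      ((hi1.div_const _).mul_const _), intervalIntegral.integral_mul_const,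
    intervalIntegral.integral_mul_const, ← hE1, intervalIntegral.integral_div, ← hA1]
  ring
end

section
/- Let X=(X1,X2) be an absolutely continuous nonnegative bivariate random vector with finite ε̄*₁(X;t1,t2) and bivariate EIT component m₁^X. Then ε̄*₁(X;t1,t2) = ∫₀^{t1} m₁^X(x1,t2) f₁(x1; t1,t2) dx1, where f₁(x1;t1,t2) = (∂F(x1,t2)/∂x1)/F(t1,t2) is the density of (X1 | X1<t1, X2<t2). -/
/-!
Write `P(x) = ∫₀^x F` and `m = P / F`, so that `m f = P · (log F)'`. Integrating by parts on
`[u, t₁]`, where `log F` is absolutely continuous because `F ≥ F(u) > 0`, gives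
`∫_u^{t₁} m f = P(t₁) log F(t₁) - P(u) log F(u) - ∫_u^{t₁} F log F`. As `u → 0⁺` the boundary term
`P(u) log F(u) = m(u) · F(u) log F(u)` vanishes, because `0 ≤ m(u) ≤ u` and `F(u) → 0`. The
resulting identity `∫₀^{t₁} m f = P(t₁) log F(t₁) - ∫₀^{t₁} F log F` is the theorem after
normalising by `F(t₁)`.
-/

open MeasureTheory Real Set intervalIntegral Filter Topology NNReal

theorem div_mul_log_div (x : ℝ) {c : ℝ} (hc : c ≠ 0) :
    x / c * log (x / c) = (x * log x - x * log c) / c := by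
  rcases eq_or_ne x 0 with rfl | hx
  · simp
  · rw [log_div hx hc]
    ring

theorem LipschitzOnWith.comp_absolutelyContinuousOnInterval {X Y : Type*} [PseudoMetricSpace X]
    [PseudoMetricSpace Y] {g : X → Y} {K : ℝ≥0} {s : Set X} {f : ℝ → X} {a b : ℝ}
    (hg : LipschitzOnWith K g s) (hf : AbsolutelyContinuousOnInterval f a b)
    (hfs : MapsTo f (uIcc a b) s) : AbsolutelyContinuousOnInterval (g ∘ f) a b := by
  unfold AbsolutelyContinuousOnInterval at hf ⊢
  refine squeeze_zero' (Eventually.of_forall fun _ ↦ Finset.sum_nonneg fun _ _ ↦ dist_nonneg) ?_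
    (by simpa using hf.const_mul (K : ℝ))
  rw [eventually_inf_principal]
  filter_upwards with E hE
  rw [Finset.mul_sum]
  gcongr with i hi
  exact hg.dist_le_mul _ (hfs (hE.1 i hi).1) _ (hfs (hE.1 i hi).2)

theorem AbsolutelyContinuousOnInterval.log {f : ℝ → ℝ} {a b : ℝ}
    (hf : AbsolutelyContinuousOnInterval f a b) (hpos : ∀ x ∈ uIcc a b, 0 < f x) :
    AbsolutelyContinuousOnInterval (fun x ↦ Real.log (f x)) a b := by
  obtain ⟨x₀, hx₀, hmin⟩ := isCompact_uIcc.exists_isMinOn nonempty_uIcc hf.continuousOn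
  obtain ⟨M, hM⟩ := hf.exists_bound
  obtain ⟨K, hK⟩ := (contDiffOn_log (n := 1).mono fun y hy ↦
    ((hpos x₀ hx₀).trans_le hy.1).ne').exists_lipschitzOnWith one_ne_zero (convex_Icc (f x₀) M)
      isCompact_Icc
  exact hK.comp_absolutelyContinuousOnInterval hf fun x hx ↦
    ⟨hmin hx, (le_abs_self _).trans (hM x hx)⟩

theorem monotoneOn_primitive {g : ℝ → ℝ} {a b : ℝ} (hg : IntervalIntegrable g volume a b)
    (hg0 : ∀ x ∈ Icc a b, 0 ≤ g x) : MonotoneOn (fun x ↦ ∫ t in a..x, g t) (Icc a b) := by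
  intro x hx y hy hxy
  have hint : ∀ z ∈ Icc a b, IntervalIntegrable g volume a z := fun z hz ↦
    hg.mono_set (uIcc_subset_uIcc left_mem_uIcc (Icc_subset_uIcc hz))
  rw [← sub_nonneg, integral_interval_sub_left (hint y hy) (hint x hx)]
  exact integral_nonneg hxy fun t ht ↦ hg0 t ⟨hx.1.trans ht.1, ht.2.trans hy.2⟩

theorem integral_primitive_mul_div_eq {g Φ : ℝ → ℝ} {a b c : ℝ}
    (hg : IntervalIntegrable g volume a b) (hΦ : ∀ x, Φ x = ∫ t in a..x, g t)
    (hc : c ∈ uIcc a b) (hpos : ∀ x ∈ uIcc c b, 0 < Φ x) :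
    ∫ x in c..b, (∫ t in a..x, Φ t) * (g x / Φ x) =
      (∫ t in a..b, Φ t) * log (Φ b) - (∫ t in a..c, Φ t) * log (Φ c) -
        ∫ x in c..b, Φ x * log (Φ x) := by
  have hsub : uIcc c b ⊆ uIcc a b := uIcc_subset_uIcc hc right_mem_uIcc
  obtain rfl : Φ = _ := funext hΦ
  set Φ := fun x ↦ ∫ t in a..x, g t
  set P := fun x ↦ ∫ t in a..x, Φ t
  have hΦac : AbsolutelyContinuousOnInterval Φ a b :=
    hg.absolutelyContinuousOnInterval_intervalIntegral left_mem_uIcc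
  have hΦint : IntervalIntegrable Φ volume a b := hΦac.continuousOn.intervalIntegrable
  have hPac : AbsolutelyContinuousOnInterval P a b :=
    hΦint.absolutelyContinuousOnInterval_intervalIntegral left_mem_uIcc
  have hderivP : ∀ᵐ x, x ∈ uIoc c b → deriv P x * log (Φ x) = Φ x * log (Φ x) := by
    filter_upwards [hΦint.ae_hasDerivAt_integral] with x hx hxI
    rw [(hx (hsub (uIoc_subset_uIcc hxI)) a left_mem_uIcc).deriv]
  have hderivL : ∀ᵐ x, x ∈ uIoc c b →
      P x * deriv (fun x ↦ log (Φ x)) x = P x * (g x / Φ x) := by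
    filter_upwards [hg.ae_hasDerivAt_integral] with x hx hxI
    have hxI' := uIoc_subset_uIcc hxI
    rw [((hx (hsub hxI') a left_mem_uIcc).log (hpos x hxI').ne').deriv]
  rw [← integral_congr_ae hderivL, ← integral_congr_ae hderivP]
  exact (hPac.mono hsub).integral_mul_deriv_eq_deriv_mul ((hΦac.mono hsub).log hpos)

/-- For `Φ = F(·, t₂)` and `a = 0` this is the bivariate EIT component `m₁^X(x, t₂)`. -/
noncomputable def meanInactivityTime (Φ : ℝ → ℝ) (a x : ℝ) : ℝ := (∫ t in a..x, Φ t) / Φ x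

section MeanInactivityTime

variable {Φ : ℝ → ℝ} {a b : ℝ}

theorem meanInactivityTime_mem_Icc {x : ℝ} (hax : a ≤ x) (hmono : MonotoneOn Φ (Icc a x))
    (hΦa : 0 ≤ Φ a) (hΦx : 0 < Φ x) : meanInactivityTime Φ a x ∈ Icc 0 (x - a) := by
  have hint : IntervalIntegrable Φ volume a x := (uIcc_of_le hax ▸ hmono).intervalIntegrable
  refine ⟨div_nonneg (integral_nonneg hax fun t ht ↦ hΦa.trans (hmono ⟨le_rfl, hax⟩ ht ht.1))
    hΦx.le, (div_le_iff₀ hΦx).2 ?_⟩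
  calc ∫ t in a..x, Φ t ≤ ∫ _ in a..x, Φ x :=
        integral_mono_on hax hint intervalIntegrable_const fun t ht ↦
          hmono ht ⟨hax, le_rfl⟩ ht.2
    _ = (x - a) * Φ x := by simp

variable (hab : a ≤ b) (hcont : ContinuousOn Φ (Icc a b)) (hmono : MonotoneOn Φ (Icc a b))
  (hpos : ∀ x ∈ Ioc a b, 0 < Φ x)
include hab hcont hmono hpos

theorem integrableOn_meanInactivityTime_mul {g : ℝ → ℝ} (hΦa : 0 ≤ Φ a)
    (hg : IntegrableOn g (Ioc a b)) :
    IntegrableOn (fun x ↦ meanInactivityTime Φ a x * g x) (Ioc a b) := by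
  have hsub : Ioc a b ⊆ uIcc a b := Ioc_subset_Icc_self.trans Icc_subset_uIcc
  have hcont' : ContinuousOn (meanInactivityTime Φ a) (Ioc a b) :=
    ((continuousOn_primitive_interval' (hcont.intervalIntegrable_of_Icc hab)
      left_mem_uIcc).mono hsub).div (hcont.mono Ioc_subset_Icc_self) fun x hx ↦ (hpos x hx).ne'
  refine hg.bdd_mul (c := b - a) (hcont'.aestronglyMeasurable measurableSet_Ioc) ?_
  filter_upwards [ae_restrict_mem measurableSet_Ioc] with x hx
  have hm := meanInactivityTime_mem_Icc hx.1.le (hmono.mono (Icc_subset_Icc_right hx.2)) hΦa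
    (hpos x hx)
  rw [norm_of_nonneg hm.1]
  linarith [hm.2, hx.2]

theorem tendsto_primitive_mul_log (hΦa : Φ a = 0) :
    Tendsto (fun x ↦ (∫ t in a..x, Φ t) * log (Φ x)) (𝓝[Ioc a b] a) (𝓝 0) := by
  have hm : ∀ x ∈ Ioc a b, meanInactivityTime Φ a x ∈ Icc 0 (x - a) := fun x hx ↦
    meanInactivityTime_mem_Icc hx.1.le (hmono.mono (Icc_subset_Icc_right hx.2)) hΦa.ge (hpos x hx)
  have hm0 : Tendsto (meanInactivityTime Φ a) (𝓝[Ioc a b] a) (𝓝 0) := by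
    refine tendsto_of_tendsto_of_tendsto_of_le_of_le' tendsto_const_nhds
      (((continuous_id.sub continuous_const).tendsto' a 0 (sub_self a)).mono_left
        nhdsWithin_le_nhds) ?_ ?_ <;>
    filter_upwards [self_mem_nhdsWithin] with x hx
    exacts [(hm x hx).1, (hm x hx).2]
  have hmulLog : Tendsto (fun x ↦ Φ x * log (Φ x)) (𝓝[Ioc a b] a) (𝓝 0) := by
    simpa [hΦa, Function.comp_def] using (continuous_mul_log.continuousAt.comp_continuousWithinAt
      (hcont a ⟨le_rfl, hab⟩)).mono_left (nhdsWithin_mono _ Ioc_subset_Icc_self)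
  refine (zero_mul (0 : ℝ) ▸ hm0.mul hmulLog).congr' ?_
  filter_upwards [self_mem_nhdsWithin] with x hx
  have := (hpos x hx).ne'
  rw [meanInactivityTime]
  field_simp

end MeanInactivityTime

theorem integral_meanInactivityTime_mul_eq {g Φ : ℝ → ℝ} {a b : ℝ} (hab : a < b)
    (hg : IntervalIntegrable g volume a b) (hg0 : ∀ x ∈ Icc a b, 0 ≤ g x)
    (hΦ : ∀ x, Φ x = ∫ t in a..x, g t) (hpos : ∀ x ∈ Ioc a b, 0 < Φ x) :
    ∫ x in a..b, meanInactivityTime Φ a x * g x =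
      (∫ t in a..b, Φ t) * log (Φ b) - ∫ x in a..b, Φ x * log (Φ x) := by
  have hΦeq : Φ = fun x ↦ ∫ t in a..x, g t := funext hΦ
  have hcont : ContinuousOn Φ (uIcc a b) :=
    hΦeq ▸ (hg.absolutelyContinuousOnInterval_intervalIntegral left_mem_uIcc).continuousOn
  rw [uIcc_of_le hab.le] at hcont
  have hmono : MonotoneOn Φ (Icc a b) := hΦeq ▸ monotoneOn_primitive hg hg0
  have hΦa : Φ a = 0 := by simp [hΦ]
  have : (𝓝[Ioc a b] a).NeBot := left_nhdsWithin_Ioc_neBot hab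
  have hl : 𝓝[Ioc a b] a ≤ 𝓝[uIcc a b] a :=
    nhdsWithin_mono _ (Ioc_subset_Icc_self.trans Icc_subset_uIcc)
  have hint : IntegrableOn (fun x ↦ meanInactivityTime Φ a x * g x) (uIcc a b) := by
    rw [uIcc_of_le hab.le, integrableOn_Icc_iff_integrableOn_Ioc]
    exact integrableOn_meanInactivityTime_mul hab.le hcont hmono hpos hΦa.ge hg.1
  have hmulLog : IntegrableOn (fun x ↦ Φ x * log (Φ x)) (uIcc a b) := by
    rw [uIcc_of_le hab.le]
    exact (continuous_mul_log.comp_continuousOn hcont).integrableOn_Icc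
  have hlimLeft :=
    ((continuousOn_primitive_interval_left hint) a left_mem_uIcc).tendsto.mono_left hl
  have hlimRight := ((tendsto_const_nhds (x := (∫ t in a..b, Φ t) * log (Φ b))).sub
    (tendsto_primitive_mul_log hab.le hcont hmono hpos hΦa)).sub
    (((continuousOn_primitive_interval_left hmulLog) a left_mem_uIcc).tendsto.mono_left hl)
  refine tendsto_nhds_unique hlimLeft ?_
  rw [← sub_zero ((∫ t in a..b, Φ t) * log (Φ b))]
  refine hlimRight.congr' ?_
  filter_upwards [self_mem_nhdsWithin] with x hx
  have hposx : ∀ y ∈ uIcc x b, 0 < Φ y := by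
    rw [uIcc_of_le hx.2]
    exact fun y hy ↦ hpos y ⟨hx.1.trans_le hy.1, hy.2⟩
  rw [← integral_primitive_mul_div_eq hg hΦ (Icc_subset_uIcc (Ioc_subset_Icc_self hx)) hposx]
  refine integral_congr fun y _ ↦ ?_
  rw [meanInactivityTime]
  ring

theorem CDCPE_as_expected_EIT_general
    (t1 t2 : ℝ) (ht1 : 0 < t1)
    (F f : ℝ → ℝ → ℝ)
    (hFt : 0 < F t1 t2)
    (hFpos : ∀ x ∈ Set.Ioc (0:ℝ) t1, 0 < F x t2)
    -- `f(·,t2)` is the partial density of `F(·,t2)`: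
    (hF : ∀ x1, F x1 t2 = ∫ u in (0:ℝ)..x1, f u t2)
    (hfnonneg : ∀ u, 0 ≤ f u t2)
    (hif : IntervalIntegrable (fun u => f u t2) volume 0 t1)
    (hiF : IntervalIntegrable (fun x => F x t2) volume 0 t1)
    (hi' : IntervalIntegrable (fun x => F x t2 * Real.log (F x t2)) volume 0 t1) :
    (-∫ x1 in (0:ℝ)..t1,
        (F x1 t2 / F t1 t2) * Real.log (F x1 t2 / F t1 t2)) =
      ∫ x1 in (0:ℝ)..t1,
        ((∫ u in (0:ℝ)..x1, F u t2) / F x1 t2) * (f x1 t2 / F t1 t2) := by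
  have key := integral_meanInactivityTime_mul_eq ht1 hif (fun x _ ↦ hfnonneg x) hF hFpos
  have hrhs : ∀ x, (∫ u in (0:ℝ)..x, F u t2) / F x t2 * (f x t2 / F t1 t2) =
      meanInactivityTime (fun x ↦ F x t2) 0 x * f x t2 / F t1 t2 := fun x ↦
    (mul_div_assoc _ _ _).symm
  simp only [div_mul_log_div _ hFt.ne', hrhs, intervalIntegral.integral_div]
  rw [integral_sub hi' (hiF.mul_const _), intervalIntegral.integral_mul_const, key]
  ring

/-- The conditional dynamic CPE is the conditional expectation of
the bivariate expected inactivity time: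
`ε̄*₁(X;t1,t2) = ∫₀^{t1} m₁^X(x1,t2) f₁(x1;t1,t2) dx1`, where
`f₁(x1;t1,t2) = f(x1,t2)/F(t1,t2)` is the density of `(X1 | X1<t1, X2<t2)` and
`m₁^X(x1,t2) = (1/F(x1,t2)) ∫₀^{x1} F(u,t2) du`. -/
theorem CDCPE_as_expected_EIT
    (t1 t2 : ℝ) (ht1 : 0 < t1) (ht2 : 0 < t2)
    (F f : ℝ → ℝ → ℝ)
    (hFt : 0 < F t1 t2)
    (hFpos : ∀ x ∈ Set.Ioc (0:ℝ) t1, 0 < F x t2)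
    -- `f(·,t2)` is the partial density of `F(·,t2)`:
    (hF : ∀ x1, F x1 t2 = ∫ u in (0:ℝ)..x1, f u t2)
    (hfnonneg : ∀ u, 0 ≤ f u t2)
    (hif : IntervalIntegrable (fun u => f u t2) volume 0 t1)
    (hiF : IntervalIntegrable (fun x => F x t2) volume 0 t1)
    (hi' : IntervalIntegrable (fun x => F x t2 * Real.log (F x t2)) volume 0 t1) :
    (-∫ x1 in (0:ℝ)..t1,
        (F x1 t2 / F t1 t2) * Real.log (F x1 t2 / F t1 t2)) =
      ∫ x1 in (0:ℝ)..t1,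
        ((∫ u in (0:ℝ)..x1, F u t2) / F x1 t2) * (f x1 t2 / F t1 t2) :=
  CDCPE_as_expected_EIT_general t1 t2 ht1 F f hFt hFpos hF hfnonneg hif hiF hi'
end

section
/- Define τ₁⁽²⁾(a,b;t2) := -∫_a^b log[F(x1,t2)/F(t1,t2)] dx1. Then ε̄*₁(X;t1,t2) = E[τ₁⁽²⁾(X1,t1;t2) | X1<t1, X2<t2], with the analogous identity for i=2. -/
open MeasureTheory Real Set intervalIntegral

lemma swap_aux (T : ℝ) (hT : 0 ≤ T) (f g : ℝ → ℝ)
    (hf : IntervalIntegrable f volume 0 T) (hg : IntervalIntegrable g volume 0 T) :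
    ∫ x in (0:ℝ)..T, (∫ u in (0:ℝ)..x, f u) * g x
      = ∫ u in (0:ℝ)..T, f u * ∫ x in u..T, g x := by
  set μ := volume.restrict (Ioc (0:ℝ) T) with hμ
  have hf' : Integrable f μ := hf.1
  have hg' : Integrable g μ := hg.1
  set S : Set (ℝ × ℝ) := {p : ℝ × ℝ | p.1 < p.2} with hS
  have hSm : MeasurableSet S := measurableSet_lt measurable_fst measurable_snd
  have hint : Integrable (S.indicator (fun p => f p.1 * g p.2)) (μ.prod μ) :=
    (hf'.mul_prod hg').indicator hSm
  have hswap := MeasureTheory.integral_integral_swap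
    (f := fun u x => S.indicator (fun p => f p.1 * g p.2) (u, x)) hint
  rw [intervalIntegral.integral_of_le hT, intervalIntegral.integral_of_le hT]
  calc ∫ x in Ioc (0:ℝ) T, (∫ u in (0:ℝ)..x, f u) * g x
      = ∫ x, (∫ u, S.indicator (fun p => f p.1 * g p.2) (u, x) ∂μ) ∂μ := by
        rw [hμ]
        refine setIntegral_congr_fun measurableSet_Ioc (fun x hx => ?_) |>.symm
        have h1 : ∀ u, S.indicator (fun p => f p.1 * g p.2) (u, x)
            = ((Iio x).indicator f u) * g x := by
          intro u
          by_cases h : u < x <;>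
            simp [hS, Set.indicator, h]
        simp_rw [h1]
        rw [MeasureTheory.integral_mul_const, MeasureTheory.integral_indicator
          (measurableSet_Iio (a := x))]
        have hset : Iio x ∩ Ioc 0 T = Ioo 0 x := by
          ext u
          simp only [mem_inter_iff, mem_Iio, mem_Ioc, mem_Ioo]
          constructor
          · rintro ⟨h1, h2⟩; exact ⟨h2.1, h1⟩
          · rintro ⟨h1, h2⟩; exact ⟨h2, h1, le_trans h2.le hx.2⟩
        rw [Measure.restrict_restrict measurableSet_Iio, hset,
          ← MeasureTheory.integral_Ioc_eq_integral_Ioo,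
          ← intervalIntegral.integral_of_le hx.1.le]
    _ = ∫ u, (∫ x, S.indicator (fun p => f p.1 * g p.2) (u, x) ∂μ) ∂μ := hswap.symm
    _ = ∫ u in Ioc (0:ℝ) T, f u * ∫ x in u..T, g x := by
        rw [hμ]
        refine setIntegral_congr_fun measurableSet_Ioc (fun u hu => ?_)
        have h1 : ∀ x, S.indicator (fun p => f p.1 * g p.2) (u, x)
            = f u * ((Ioi u).indicator g x) := by
          intro x
          by_cases h : u < x <;> simp [hS, Set.indicator, h]
        simp_rw [h1]
        rw [MeasureTheory.integral_const_mul, MeasureTheory.integral_indicator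
          (measurableSet_Ioi (a := u))]
        have hset : Ioi u ∩ Ioc 0 T = Ioc u T := by
          ext x
          simp only [mem_inter_iff, mem_Ioi, mem_Ioc]
          constructor
          · rintro ⟨h1, h2⟩; exact ⟨h1, h2.2⟩
          · rintro ⟨h1, h2⟩; exact ⟨h1, lt_trans hu.1 h1, h2⟩
        rw [Measure.restrict_restrict measurableSet_Ioi, hset,
          ← intervalIntegral.integral_of_le hu.2]


/-- With `τ₁⁽²⁾(a,b;t2) := -∫_a^b log (F(x1,t2)/F(t1,t2)) dx1`,
one has `ε̄*₁(X;t1,t2) = E[τ₁⁽²⁾(X1,t1;t2) | X1 < t1, X2 < t2]`, the conditional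
expectation being with respect to the density `f(u,t2)/F(t1,t2)` on `(0,t1)`;
and the analogous identity holds for `i = 2`. -/
theorem CDCPE_tau_representation
    (t1 t2 : ℝ) (ht1 : 0 < t1) (ht2 : 0 < t2)
    (F f : ℝ → ℝ → ℝ)
    (hFt : 0 < F t1 t2)
    (hfnonneg : ∀ u v, 0 ≤ f u v)
    (hF1 : ∀ x1, F x1 t2 = ∫ u in (0:ℝ)..x1, f u t2)
    (hF2 : ∀ x2, F t1 x2 = ∫ u in (0:ℝ)..x2, f t1 u)
    (hif1 : IntervalIntegrable (fun u => f u t2) volume 0 t1)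
    (hif2 : IntervalIntegrable (fun u => f t1 u) volume 0 t2)
    (hilog1 : IntervalIntegrable (fun x => Real.log (F x t2 / F t1 t2)) volume 0 t1)
    (hilog2 : IntervalIntegrable (fun x => Real.log (F t1 x / F t1 t2)) volume 0 t2)
    (hi1 : IntervalIntegrable
      (fun x => (F x t2 / F t1 t2) * Real.log (F x t2 / F t1 t2)) volume 0 t1)
    (hi2 : IntervalIntegrable
      (fun x => (F t1 x / F t1 t2) * Real.log (F t1 x / F t1 t2)) volume 0 t2) :
    ((-∫ x1 in (0:ℝ)..t1,
        (F x1 t2 / F t1 t2) * Real.log (F x1 t2 / F t1 t2)) =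
      ∫ u in (0:ℝ)..t1,
        (f u t2 / F t1 t2) * (-∫ x1 in u..t1, Real.log (F x1 t2 / F t1 t2))) ∧
    ((-∫ x2 in (0:ℝ)..t2,
        (F t1 x2 / F t1 t2) * Real.log (F t1 x2 / F t1 t2)) =
      ∫ u in (0:ℝ)..t2,
        (f t1 u / F t1 t2) * (-∫ x2 in u..t2, Real.log (F t1 x2 / F t1 t2))) := by
  constructor
  · have hFeq : ∀ x, F x t2 / F t1 t2 = ∫ u in (0:ℝ)..x, f u t2 / F t1 t2 := fun x => by
      rw [hF1 x, intervalIntegral.integral_div]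
    have key := swap_aux t1 ht1.le (fun u => f u t2 / F t1 t2)
      (fun x => Real.log (F x t2 / F t1 t2)) (hif1.div_const _) hilog1
    simp_rw [← hFeq] at key
    simp_rw [mul_neg]
    rw [intervalIntegral.integral_neg, key]
  · have hFeq : ∀ x, F t1 x / F t1 t2 = ∫ u in (0:ℝ)..x, f t1 u / F t1 t2 := fun x => by
      rw [hF2 x, intervalIntegral.integral_div]
    have key := swap_aux t2 ht2.le (fun u => f t1 u / F t1 t2)
      (fun x => Real.log (F t1 x / F t1 t2)) (hif2.div_const _) hilog2
    simp_rw [← hFeq] at key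
    simp_rw [mul_neg]
    rw [intervalIntegral.integral_neg, key]
end

section
/- Let Y_i = c_i X_i + d_i with c_i > 0, d_i ≥ 0. Then for t_i ≥ d_i, ε̄*_i(Y;t1,t2) = c_i · ε̄*_i(X; (t1-d1)/c1, (t2-d2)/c2), i = 1, 2; hence conditional dynamic CPE is a shift-dependent measure. -/
open MeasureTheory Real Set intervalIntegral

lemma CDCPE_key (c d t : ℝ) (hc : 0 < c) (hd : 0 ≤ d) (ht : d ≤ t)
    (f : ℝ → ℝ) (hf : ∀ x ≤ (0:ℝ), f x = 0) :
    (∫ x in (0:ℝ)..t, f ((x - d) / c)) = c * ∫ x in (0:ℝ)..((t - d) / c), f x := by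
  have h1 : (∫ x in (0:ℝ)..t, f ((x - d) / c))
      = ∫ x in (0 - d)..(t - d), f (x / c) := by
    rw [← intervalIntegral.integral_comp_sub_right (fun x => f (x / c)) d]
  have h2 : (∫ x in (0 - d)..(t - d), f (x / c))
      = c • ∫ x in ((0 - d)/c)..((t - d)/c), f x :=
    intervalIntegral.integral_comp_div f hc.ne'
  have hlb : (0 - d) / c ≤ 0 := by
    apply div_nonpos_of_nonpos_of_nonneg <;> linarith
  have hub : (0:ℝ) ≤ (t - d) / c := div_nonneg (by linarith) hc.le
  have h3 : (∫ x in ((0 - d)/c)..((t - d)/c), f x)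
      = ∫ x in (0:ℝ)..((t - d)/c), f x := by
    rw [intervalIntegral.integral_of_le (le_trans hlb hub),
      intervalIntegral.integral_of_le hub]
    refine setIntegral_eq_of_subset_of_forall_diff_eq_zero measurableSet_Ioc
      (Ioc_subset_Ioc hlb le_rfl) ?_
    intro x hx
    rcases hx with ⟨hx1, hx2⟩
    simp only [mem_Ioc, not_and, not_lt] at hx2
    exact hf x (not_lt.1 fun h0 => hx2 h0 hx1.2)
  rw [h1, h2, h3, smul_eq_mul]

/-- If `Y_i = c_i X_i + d_i` with `c_i > 0`, `d_i ≥ 0`, so that the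
joint distribution function of `Y` is `G(t1,t2) = F((t1-d1)/c1, (t2-d2)/c2)`,
then for `t_i ≥ d_i` the conditional dynamic CPE satisfies
`ε̄*_i(Y;t1,t2) = c_i · ε̄*_i(X;(t1-d1)/c1,(t2-d2)/c2)` for `i = 1, 2`. -/
theorem CDCPE_linear_transform
    (c1 c2 d1 d2 t1 t2 : ℝ)
    (hc1 : 0 < c1) (hc2 : 0 < c2) (hd1 : 0 ≤ d1) (hd2 : 0 ≤ d2)
    (ht1 : d1 ≤ t1) (ht2 : d2 ≤ t2)
    (F G : ℝ → ℝ → ℝ)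
    (hG : ∀ s1 s2, G s1 s2 = F ((s1 - d1) / c1) ((s2 - d2) / c2))
    -- `X` is nonnegative, so `F` vanishes when either argument is nonpositive:
    (hF0 : ∀ s1 s2, s1 ≤ 0 ∨ s2 ≤ 0 → F s1 s2 = 0) :
    ((-∫ x in (0:ℝ)..t1, (G x t2 / G t1 t2) * Real.log (G x t2 / G t1 t2)) =
      c1 * (-∫ x in (0:ℝ)..((t1 - d1) / c1),
        (F x ((t2 - d2) / c2) / F ((t1 - d1) / c1) ((t2 - d2) / c2)) *
          Real.log
            (F x ((t2 - d2) / c2) / F ((t1 - d1) / c1) ((t2 - d2) / c2)))) ∧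
    ((-∫ x in (0:ℝ)..t2, (G t1 x / G t1 t2) * Real.log (G t1 x / G t1 t2)) =
      c2 * (-∫ x in (0:ℝ)..((t2 - d2) / c2),
        (F ((t1 - d1) / c1) x / F ((t1 - d1) / c1) ((t2 - d2) / c2)) *
          Real.log
            (F ((t1 - d1) / c1) x / F ((t1 - d1) / c1) ((t2 - d2) / c2)))) := by
  set a := (t2 - d2) / c2 with ha
  set b := (t1 - d1) / c1 with hb
  constructor
  · have h := CDCPE_key c1 d1 t1 hc1 hd1 ht1
      (fun x => (F x a / F b a) * Real.log (F x a / F b a))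
      (fun x hx => by simp [hF0 x a (Or.inl hx)])
    simp only [hG, ← ha, ← hb] at *
    rw [h]; ring
  · have h := CDCPE_key c2 d2 t2 hc2 hd2 ht2
      (fun x => (F b x / F b a) * Real.log (F b x / F b a))
      (fun x hx => by simp [hF0 b x (Or.inr hx)])
    simp only [hG, ← ha, ← hb] at *
    rw [h]; ring
end
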